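/- Let E be a channel with generalized robustness of coherence R(E) (minimal r ≥ 0 such that (E + rF)/(1+r) is a classical channel for some channel F). Then for any M dephasing superchannels {Ξ_{C_i}}, any bipartite input state ρ, and any POVM {E_i}, one has Σ_{i=1}^M Tr[E_i (Ξ_{C_i}[E] ⊗ I)(ρ)] ≤ 1 + R(E); hence if the M superchannels are distinguishable via E with average success probability 1−ε, then M ≤ (1+R(E))/(1−ε). -/

import Mathlib

open Matrix
open scoped Kronecker ComplexOrder

noncomputable section

/-- The Schur-product (Hadamard-product) superoperator `X ↦ X ∘ C`. -/
def schurMap {d : ℕ} (C : Matrix (Fin d) (Fin d) ℂ) :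
    Matrix (Fin d) (Fin d) ℂ →ₗ[ℂ] Matrix (Fin d) (Fin d) ℂ where
  toFun X := X.hadamard C
  map_add' X Y := by ext i j; simp [Matrix.hadamard]; ring
  map_smul' c X := by ext i j; simp [Matrix.hadamard]; ring

/-- The extension `E ⊗ I_n` of a superoperator, applied to a bipartite matrix. -/
def tensExt {d : ℕ} (E : Matrix (Fin d) (Fin d) ℂ →ₗ[ℂ] Matrix (Fin d) (Fin d) ℂ) (n : ℕ)
    (ρ : Matrix (Fin d × Fin n) (Fin d × Fin n) ℂ) :
    Matrix (Fin d × Fin n) (Fin d × Fin n) ℂ :=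
  Matrix.of fun p q => ∑ i, ∑ j, (E (Matrix.single i j 1)) p.1 q.1 * ρ (i, p.2) (j, q.2)

/-- Complete positivity: every extension `E ⊗ I_n` preserves positive semidefiniteness. -/
def IsCP {d : ℕ} (E : Matrix (Fin d) (Fin d) ℂ →ₗ[ℂ] Matrix (Fin d) (Fin d) ℂ) : Prop :=
  ∀ (n : ℕ) (ρ : Matrix (Fin d × Fin n) (Fin d × Fin n) ℂ),
    ρ.PosSemidef → (tensExt E n ρ).PosSemidef

/-- Trace preservation. -/
def IsTP {d : ℕ} (E : Matrix (Fin d) (Fin d) ℂ →ₗ[ℂ] Matrix (Fin d) (Fin d) ℂ) : Prop :=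
  ∀ X, (E X).trace = X.trace

/-- Quantum channel: completely positive and trace-preserving. -/
def IsCPTP {d : ℕ} (E : Matrix (Fin d) (Fin d) ℂ →ₗ[ℂ] Matrix (Fin d) (Fin d) ℂ) : Prop :=
  IsCP E ∧ IsTP E

/-- The Jamiołkowski matrix `J(E) = (E ⊗ I)(|Ψ⟩⟨Ψ|)`, with entries
`J(E)_{(i,k),(j,l)} = E(|k⟩⟨l|)_{i j} / d`. -/
def jam {d : ℕ} (E : Matrix (Fin d) (Fin d) ℂ →ₗ[ℂ] Matrix (Fin d) (Fin d) ℂ) :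
    Matrix (Fin d × Fin d) (Fin d × Fin d) ℂ :=
  Matrix.of fun p q => (E (Matrix.single p.2 q.2 1)) p.1 q.1 / d

/-- Controlled unitary `U = Σ_i |i⟩⟨i| ⊗ U_i`. -/
def ctrl {d n : ℕ} (Us : Fin d → Matrix (Fin n) (Fin n) ℂ) :
    Matrix (Fin d × Fin n) (Fin d × Fin n) ℂ :=
  Matrix.of fun p q => (if p.1 = q.1 then (1 : ℂ) else 0) * (Us p.1) p.2 q.2


/-- The classical channel `E_T(ρ) = Σ_{ij} T_ij ⟨j|ρ|j⟩ |i⟩⟨i|` of a matrix `T`. -/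
def classicalChannel {d : ℕ} (T : Matrix (Fin d) (Fin d) ℝ) :
    Matrix (Fin d) (Fin d) ℂ →ₗ[ℂ] Matrix (Fin d) (Fin d) ℂ where
  toFun ρ := Matrix.of fun i i' => if i = i' then ∑ j, (T i j : ℂ) * ρ j j else 0
  map_add' X Y := by
    ext i i'
    by_cases h : i = i'
    · simp [h, mul_add, Finset.sum_add_distrib]
    · simp [h]
  map_smul' c X := by
    ext i i'
    by_cases h : i = i'
    · simp [h, Finset.mul_sum]
      exact Finset.sum_congr rfl fun j _ => by ring
    · simp [h]

/-- A classical quantum channel: one of the form `E_T` with `T` stochastic. -/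
def IsClassical {d : ℕ} (E : Matrix (Fin d) (Fin d) ℂ →ₗ[ℂ] Matrix (Fin d) (Fin d) ℂ) :
    Prop :=
  ∃ T : Matrix (Fin d) (Fin d) ℝ, (∀ i j, 0 ≤ T i j) ∧ (∀ j, ∑ i, T i j = 1) ∧
    E = classicalChannel T

/-! Write `E = (1 + r) E_T - r F` with `E_T` classical. A dephasing superchannel multiplies Choi
matrices entrywise by `C`; it fixes `E_T`, whose Choi matrix is diagonal while `C` has unit
diagonal, and it keeps `F` completely positive by the Schur product theorem. Hence
`(Ξ_{C_i}[E] ⊗ I)(ρ) = (1 + r) σ - r τ_i` with `σ = (E_T ⊗ I)(ρ)` of unit trace and `τ_i ≥ 0`,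
and pairing with the POVM gives `(1 + r) - r Σ_i Tr[E_i τ_i] ≤ 1 + r`. -/

open scoped MatrixOrder in
theorem Matrix.PosSemidef.trace_mul_nonneg {𝕜 N : Type*} [RCLike 𝕜] [Fintype N] [DecidableEq N]
    {A B : Matrix N N 𝕜} (hA : A.PosSemidef) (hB : B.PosSemidef) : 0 ≤ (A * B).trace := by
  obtain ⟨X, rfl⟩ := CStarAlgebra.nonneg_iff_eq_star_mul_self.mp hA.nonneg
  rw [star_eq_conjTranspose, mul_assoc, trace_mul_comm]
  exact (hB.mul_mul_conjTranspose_same X).trace_nonneg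

section ChoiCalculus

variable {m k ι : Type*} [Fintype m] [Fintype k] [Fintype ι]

/-- `(Φ ⊗ I)(ρ)` for the superoperator `Φ` whose unnormalised Choi matrix is `J`. -/
def tensExtOfChoi (ρ : Matrix (k × ι) (k × ι) ℂ) :
    Matrix (m × k) (m × k) ℂ →ₗ[ℂ] Matrix (m × ι) (m × ι) ℂ where
  toFun J := of fun p q => ∑ a, ∑ b, J (p.1, a) (q.1, b) * ρ (a, p.2) (b, q.2)
  map_add' J J' := by ext; simp [add_mul, Finset.sum_add_distrib]
  map_smul' c J := by ext; simp [Finset.mul_sum, mul_assoc]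

theorem tensExtOfChoi_posSemidef [DecidableEq m] [DecidableEq k] [DecidableEq ι]
    {J : Matrix (m × k) (m × k) ℂ} {ρ : Matrix (k × ι) (k × ι) ℂ}
    (hJ : J.PosSemidef) (hρ : ρ.PosSemidef) : (tensExtOfChoi ρ J).PosSemidef := by
  -- `W` identifies the two middle indices: `tensExtOfChoi ρ J` is a compression of `J ⊗ ρ`.
  let W : Matrix ((m × k) × (k × ι)) (m × ι) ℂ :=
    of fun s p => if s.1.1 = p.1 ∧ s.1.2 = s.2.1 ∧ s.2.2 = p.2 then 1 else 0
  have hW : tensExtOfChoi ρ J = Wᴴ * (J ⊗ₖ ρ) * W := by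
    ext p q
    simpa [W, tensExtOfChoi, mul_apply, Fintype.sum_prod_type, ite_and, apply_ite (starRingEnd ℂ),
      ite_mul] using Finset.sum_comm
  rw [hW]
  exact (hJ.kronecker hρ).conjTranspose_mul_mul_same W

end ChoiCalculus

section Channels

variable {d : ℕ}

def choiMatrix :
    (Matrix (Fin d) (Fin d) ℂ →ₗ[ℂ] Matrix (Fin d) (Fin d) ℂ) →ₗ[ℂ]
      Matrix (Fin d × Fin d) (Fin d × Fin d) ℂ where
  toFun E := of fun p q => E (single p.2 q.2 1) p.1 q.1
  map_add' E E' := by ext; simp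
  map_smul' c E := by ext; simp

theorem tensExt_eq_tensExtOfChoi (E : Matrix (Fin d) (Fin d) ℂ →ₗ[ℂ] Matrix (Fin d) (Fin d) ℂ)
    (n : ℕ) (ρ : Matrix (Fin d × Fin n) (Fin d × Fin n) ℂ) :
    tensExt E n ρ = tensExtOfChoi ρ (choiMatrix E) :=
  rfl

theorem jam_eq_inv_smul_choiMatrix
    (E : Matrix (Fin d) (Fin d) ℂ →ₗ[ℂ] Matrix (Fin d) (Fin d) ℂ) :
    jam E = (d : ℂ)⁻¹ • choiMatrix E := by
  ext
  simp [jam, choiMatrix, div_eq_inv_mul]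

theorem choiMatrix_posSemidef {E : Matrix (Fin d) (Fin d) ℂ →ₗ[ℂ] Matrix (Fin d) (Fin d) ℂ}
    (hE : IsCP E) : (choiMatrix E).PosSemidef := by
  let Ω : Fin d × Fin d → ℂ := fun p => if p.1 = p.2 then 1 else 0
  have hΩ : choiMatrix E = tensExt E d (vecMulVec Ω (star Ω)) := by
    ext p q
    simp [choiMatrix, tensExt, vecMulVec_apply, Ω]
  rw [hΩ]
  exact hE d _ (posSemidef_vecMulVec_self_star Ω)

theorem choiMatrix_classicalChannel (T : Matrix (Fin d) (Fin d) ℝ) :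
    choiMatrix (classicalChannel T) = diagonal fun p => (T p.1 p.2 : ℂ) := by
  ext ⟨a, b⟩ ⟨c, e⟩
  simp only [choiMatrix, classicalChannel, LinearMap.coe_mk, AddHom.coe_mk, of_apply,
    diagonal_apply, Prod.mk.injEq, single_apply]
  by_cases hac : a = c
  · subst hac
    by_cases hbe : b = e
    · simp [hbe]
    · simp only [hbe, and_false, if_false]
      refine Finset.sum_eq_zero fun x _ => ?_
      rw [if_neg fun h : b = x ∧ e = x => hbe (h.1.trans h.2.symm), mul_zero]
  · simp [hac]

theorem isTP_classicalChannel {T : Matrix (Fin d) (Fin d) ℝ} (hT : ∀ j, ∑ i, T i j = 1) :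
    IsTP (classicalChannel T) := by
  intro X
  simp [classicalChannel, trace, Finset.sum_comm (γ := Fin d), ← Finset.sum_mul,
    ← Complex.ofReal_sum, hT]

theorem trace_tensExt {E : Matrix (Fin d) (Fin d) ℂ →ₗ[ℂ] Matrix (Fin d) (Fin d) ℂ}
    (hE : IsTP E) (n : ℕ) (ρ : Matrix (Fin d × Fin n) (Fin d × Fin n) ℂ) :
    (tensExt E n ρ).trace = ρ.trace := by
  have hEsingle : ∀ i j, ∑ a, E (single i j 1) a a = if i = j then 1 else 0 := by
    intro i j
    refine (hE (single i j 1)).trans ?_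
    split_ifs with h
    · rw [h, trace_single_eq_same]
    · exact trace_single_eq_of_ne _ _ _ h
  simp only [trace, diag_apply, tensExt, of_apply, Fintype.sum_prod_type_right]
  refine Finset.sum_congr rfl fun b _ => ?_
  rw [Finset.sum_comm]
  refine Finset.sum_congr rfl fun i _ => ?_
  rw [Finset.sum_comm]
  simp [← Finset.sum_mul, hEsingle]

theorem choiMatrix_eq_hadamard_of_jam_eq (hd : d ≠ 0)
    {E G : Matrix (Fin d) (Fin d) ℂ →ₗ[ℂ] Matrix (Fin d) (Fin d) ℂ}
    {C : Matrix (Fin d × Fin d) (Fin d × Fin d) ℂ} (h : jam G = jam E ⊙ C) :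
    choiMatrix G = choiMatrix E ⊙ C := by
  have hd' : (d : ℂ)⁻¹ ≠ 0 := inv_ne_zero (Nat.cast_ne_zero.mpr hd)
  rw [jam_eq_inv_smul_choiMatrix, jam_eq_inv_smul_choiMatrix, smul_hadamard] at h
  exact smul_right_injective _ hd' h

end Channels

theorem eq_smul_sub_smul_of_inv_smul_add_eq {V : Type*} [AddCommGroup V] [Module ℂ V]
    {x y z : V} {r : ℝ} (hr : 0 ≤ r) (h : ((1 : ℂ) + r)⁻¹ • (x + (r : ℂ) • y) = z) :
    x = ((1 : ℂ) + r) • z - (r : ℂ) • y := by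
  have h1r : (1 : ℂ) + r ≠ 0 := by exact_mod_cast (by positivity : (1 + r : ℝ) ≠ 0)
  rw [← h, smul_smul, mul_inv_cancel₀ h1r, one_smul, add_sub_cancel_right]

theorem tensExt_eq_of_jam_eq_hadamard {d : ℕ} (hd : d ≠ 0)
    {E F G : Matrix (Fin d) (Fin d) ℂ →ₗ[ℂ] Matrix (Fin d) (Fin d) ℂ}
    {T : Matrix (Fin d) (Fin d) ℝ} {r : ℝ}
    (hEF : E = ((1 : ℂ) + r) • classicalChannel T - (r : ℂ) • F)
    {C : Matrix (Fin d × Fin d) (Fin d × Fin d) ℂ} (hC : ∀ p, C p p = 1)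
    (hG : jam G = jam E ⊙ C) (n : ℕ) (ρ : Matrix (Fin d × Fin n) (Fin d × Fin n) ℂ) :
    tensExt G n ρ = ((1 : ℂ) + r) • tensExt (classicalChannel T) n ρ
      - (r : ℂ) • tensExtOfChoi ρ (choiMatrix F ⊙ C) := by
  have hCdiag : C.diag = 1 := funext hC
  rw [tensExt_eq_tensExtOfChoi, tensExt_eq_tensExtOfChoi,
    choiMatrix_eq_hadamard_of_jam_eq hd hG, hEF, map_sub, map_smul, map_smul,
    sub_eq_add_neg, ← neg_smul, add_hadamard, smul_hadamard, smul_hadamard,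
    choiMatrix_classicalChannel, diagonal_hadamard, hCdiag, mul_one, map_add, map_smul,
    map_smul, neg_smul, ← sub_eq_add_neg]

theorem re_sum_trace_mul_smul_sub_smul_le {ι N : Type*} [Fintype ι] [Fintype N] [DecidableEq N]
    {P : ι → Matrix N N ℂ} (hP : ∀ i, (P i).PosSemidef) (hP1 : ∑ i, P i = 1)
    {X : Matrix N N ℂ} (hX : X.trace = 1) {Y : ι → Matrix N N ℂ} (hY : ∀ i, (Y i).PosSemidef)
    {r : ℝ} (hr : 0 ≤ r) :
    (∑ i, (P i * (((1 : ℂ) + r) • X - (r : ℂ) • Y i)).trace).re ≤ 1 + r := by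
  set W := ∑ i, (P i * Y i).trace
  have hW : 0 ≤ W := Finset.sum_nonneg fun i _ => (hP i).trace_mul_nonneg (hY i)
  have hsum : ∑ i, (P i * (((1 : ℂ) + r) • X - (r : ℂ) • Y i)).trace = (1 + r) - r * W := by
    simp only [mul_sub, mul_smul_comm, trace_sub, trace_smul, Finset.sum_sub_distrib,
      smul_eq_mul, ← Finset.mul_sum, ← trace_sum, ← Finset.sum_mul, hP1, one_mul, hX, mul_one, W]
  rw [hsum, Complex.sub_re, Complex.add_re, Complex.one_re, Complex.ofReal_re,
    Complex.re_ofReal_mul]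
  have := mul_nonneg hr (Complex.nonneg_iff.mp hW).1
  linarith

theorem le_div_of_inv_mul_eq {M S B ε : ℝ} (hS : S ≤ B) (hε : ε < 1) (h : M⁻¹ * S = 1 - ε) :
    M ≤ B / (1 - ε) := by
  have hM : M ≠ 0 := by
    rintro rfl
    simp only [_root_.inv_zero, zero_mul] at h
    linarith
  rw [le_div_iff₀ (by linarith), ← h, mul_inv_cancel_left₀ hM]
  exact hS

theorem stmt18_general (d n M : ℕ)
    (E : Matrix (Fin d) (Fin d) ℂ →ₗ[ℂ] Matrix (Fin d) (Fin d) ℂ)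
    (r : ℝ) (hr : 0 ≤ r)
    (F : Matrix (Fin d) (Fin d) ℂ →ₗ[ℂ] Matrix (Fin d) (Fin d) ℂ) (hF : IsCPTP F)
    (hmix : IsClassical ((((1 : ℂ) + r)⁻¹) • (E + (r : ℂ) • F)))
    (C : Fin M → Matrix (Fin d × Fin d) (Fin d × Fin d) ℂ)
    (hCpsd : ∀ i, (C i).PosSemidef) (hCdiag : ∀ i p, (C i) p p = 1)
    (G : Fin M → (Matrix (Fin d) (Fin d) ℂ →ₗ[ℂ] Matrix (Fin d) (Fin d) ℂ))
    (hGjam : ∀ i, jam (G i) = (jam E).hadamard (C i))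
    (ρ : Matrix (Fin d × Fin n) (Fin d × Fin n) ℂ)
    (hρ : ρ.PosSemidef) (hρtr : ρ.trace = 1)
    (Es : Fin M → Matrix (Fin d × Fin n) (Fin d × Fin n) ℂ)
    (hEs : ∀ i, (Es i).PosSemidef) (hEsum : ∑ i, Es i = 1) :
    (∑ i, (Es i * tensExt (G i) n ρ).trace).re ≤ 1 + r ∧
    ∀ ε : ℝ, ε < 1 →
      (M : ℝ)⁻¹ * (∑ i, (Es i * tensExt (G i) n ρ).trace).re = 1 - ε →
      (M : ℝ) ≤ (1 + r) / (1 - ε) := by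
  have hd : d ≠ 0 := by
    rintro rfl
    simp [trace] at hρtr
  obtain ⟨T, -, hTcol, hT⟩ := hmix
  have hEF := eq_smul_sub_smul_of_inv_smul_add_eq hr hT
  have hG : ∀ i, tensExt (G i) n ρ = ((1 : ℂ) + r) • tensExt (classicalChannel T) n ρ
      - (r : ℂ) • tensExtOfChoi ρ (choiMatrix F ⊙ C i) :=
    fun i => tensExt_eq_of_jam_eq_hadamard hd hEF (hCdiag i) (hGjam i) n ρ
  have hbound : (∑ i, (Es i * tensExt (G i) n ρ).trace).re ≤ 1 + r := by
    simp only [hG]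
    exact re_sum_trace_mul_smul_sub_smul_le hEs hEsum
      ((trace_tensExt (isTP_classicalChannel hTcol) n ρ).trans hρtr)
      (fun i => tensExtOfChoi_posSemidef ((choiMatrix_posSemidef hF.1).hadamard (hCpsd i)) hρ) hr
  exact ⟨hbound, fun ε hε h => le_div_of_inv_mul_eq hbound hε h⟩

/-- if `r ≥ 0` witnesses the (generalized) robustness of coherence of
a channel `E`, i.e. `(E + rF)/(1+r)` is classical for some channel `F`, then for any
`M` dephasing superchannels (given by correlation matrices `C i` with constant
diagonal blocks, producing channels `G i` with `J(G i) = J(E) ∘ C i`), any bipartite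
input state and any POVM, the total success weight is at most `1 + r`; hence if the
average success probability is `1 − ε`, then `M ≤ (1 + r)/(1 − ε)`. -/
theorem stmt18 (d n M : ℕ)
    (E : Matrix (Fin d) (Fin d) ℂ →ₗ[ℂ] Matrix (Fin d) (Fin d) ℂ) (hE : IsCPTP E)
    (r : ℝ) (hr : 0 ≤ r)
    (F : Matrix (Fin d) (Fin d) ℂ →ₗ[ℂ] Matrix (Fin d) (Fin d) ℂ) (hF : IsCPTP F)
    (hmix : IsClassical ((((1 : ℂ) + r)⁻¹) • (E + (r : ℂ) • F)))
    (C : Fin M → Matrix (Fin d × Fin d) (Fin d × Fin d) ℂ)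
    (hCpsd : ∀ i, (C i).PosSemidef) (hCdiag : ∀ i p, (C i) p p = 1)
    (hCblocks : ∀ i a a' k l, (C i) (a, k) (a, l) = (C i) (a', k) (a', l))
    (G : Fin M → (Matrix (Fin d) (Fin d) ℂ →ₗ[ℂ] Matrix (Fin d) (Fin d) ℂ))
    (hGcptp : ∀ i, IsCPTP (G i)) (hGjam : ∀ i, jam (G i) = (jam E).hadamard (C i))
    (ρ : Matrix (Fin d × Fin n) (Fin d × Fin n) ℂ)
    (hρ : ρ.PosSemidef) (hρtr : ρ.trace = 1)
    (Es : Fin M → Matrix (Fin d × Fin n) (Fin d × Fin n) ℂ)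
    (hEs : ∀ i, (Es i).PosSemidef) (hEsum : ∑ i, Es i = 1) :
    (∑ i, (Es i * tensExt (G i) n ρ).trace).re ≤ 1 + r ∧
    ∀ ε : ℝ, ε < 1 →
      (M : ℝ)⁻¹ * (∑ i, (Es i * tensExt (G i) n ρ).trace).re = 1 - ε →
      (M : ℝ) ≤ (1 + r) / (1 - ε) :=
  stmt18_general d n M E r hr F hF hmix C hCpsd hCdiag G hGjam ρ hρ hρtr Es hEs hEsum

end
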